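/- Let S be an m-Noetherian commutative semiring (every S-subsemimodule of S^n is finitely generated for every n) and A an S-semialgebra. For f ∈ A* = Hom_S(A, S), the following are equivalent: (i) there exist n ∈ ℕ and functions f_1, …, f_n, g_1, …, g_n : A → S such that f(ab) = Σ_{i=1}^n f_i(a)·g_i(b) for all a, b ∈ A; (ii) the S-subsemimodule of A* generated by { a ⇀ f | a ∈ A }, where (a ⇀ f)(b) := f(ba), is finitely generated; (iii) the S-subsemimodule of A* generated by { f ↼ a | a ∈ A }, where (f ↼ a)(b) := f(ab), is finitely generated. -/
import Mathlib

open TensorProduct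

section Aux

variable (S : Type*) [CommSemiring S] (A : Type*) [Semiring A] [Algebra S A]

/-- The coercion of linear functionals to functions, as a linear map. -/
def dualCoePi : Module.Dual S A →ₗ[S] (A → S) where
  toFun g := ⇑g
  map_add' _ _ := rfl
  map_smul' _ _ := rfl

variable {S A}

lemma dualCoePi_injective : Function.Injective (dualCoePi S A) :=
  fun _ _ h => DFunLike.coe_injective h

/-- `c ↦ fun b => ∑ i, c i * w i b` as a linear map `(Fin n → S) →ₗ (A → S)`. -/
def comboMap {n : ℕ} (w : Fin n → (A → S)) : (Fin n → S) →ₗ[S] (A → S) where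
  toFun c := fun b => ∑ i, c i * w i b
  map_add' c d := by
    funext b
    simp [add_mul, Finset.sum_add_distrib]
  map_smul' s c := by
    funext b
    simp [Finset.mul_sum, mul_assoc, smul_eq_mul]

lemma span_fg_of_factor
    (hNoeth : ∀ (n : ℕ) (N : Submodule S (Fin n → S)), N.FG)
    (g : A → Module.Dual S A) {n : ℕ} (w : Fin n → (A → S))
    (h : ∀ a : A, ∃ c : Fin n → S, ∀ b : A, g a b = ∑ i, c i * w i b) :
    (Submodule.span S (Set.range g)).FG := by
  set N := Submodule.span S (Set.range g)
  have hle : N.map (dualCoePi S A) ≤ LinearMap.range (comboMap w) := by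
    rw [Submodule.map_span, Submodule.span_le]
    rintro - ⟨-, ⟨a, rfl⟩, rfl⟩
    obtain ⟨c, hc⟩ := h a
    exact ⟨c, by funext b; exact (hc b).symm⟩
  have hmap : ((N.map (dualCoePi S A)).comap (comboMap w)).map (comboMap w)
      = N.map (dualCoePi S A) := by
    rw [Submodule.map_comap_eq, inf_eq_right.mpr hle]
  have : (N.map (dualCoePi S A)).FG := by
    rw [← hmap]
    exact Submodule.FG.map _ (hNoeth n _)
  exact Submodule.fg_of_fg_map_injective _ dualCoePi_injective this

lemma factor_of_span_fg
    (g : A → Module.Dual S A)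
    (hfg : (Submodule.span S (Set.range g)).FG) :
    ∃ (n : ℕ) (w : Fin n → Module.Dual S A) (c : A → Fin n → S),
      ∀ a b : A, g a b = ∑ i, c a i * w i b := by
  obtain ⟨n, v, hv⟩ := Submodule.fg_iff_exists_fin_generating_family.mp hfg
  have hmem : ∀ a : A, ∃ c : Fin n → S, ∑ i, c i • v i = g a := by
    intro a
    rw [← Submodule.mem_span_range_iff_exists_fun S, hv]
    exact Submodule.subset_span ⟨a, rfl⟩
  choose c hc using hmem
  refine ⟨n, v, c, fun a b => ?_⟩
  have := congrArg (fun φ : Module.Dual S A => φ b) (hc a)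
  rw [← this]
  simp [smul_eq_mul]

end Aux

theorem finiteDual_tfae
    (S : Type*) [CommSemiring S] (A : Type*) [Semiring A] [Algebra S A]
    (hNoeth : ∀ (n : ℕ) (N : Submodule S (Fin n → S)), N.FG)
    (f : Module.Dual S A) :
    List.TFAE
      [ ∃ (n : ℕ) (fi gi : Fin n → (A → S)),
          ∀ a b : A, f (a * b) = ∑ i, fi i a * gi i b,
        -- the `S`-span of `{a ⇀ f | a ∈ A}`, where `(a ⇀ f) b = f (b * a)`
        (Submodule.span S
          (Set.range fun a : A => f ∘ₗ LinearMap.mulRight S a)).FG,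
        -- the `S`-span of `{f ↼ a | a ∈ A}`, where `(f ↼ a) b = f (a * b)`
        (Submodule.span S
          (Set.range fun a : A => f ∘ₗ LinearMap.mulLeft S a)).FG ] := by
  tfae_have 1 → 2 := by
    rintro ⟨n, fi, gi, h⟩
    refine span_fg_of_factor hNoeth _ fi (fun a => ⟨fun i => gi i a, fun b => ?_⟩)
    simp only [LinearMap.coe_comp, Function.comp_apply, LinearMap.mulRight_apply]
    rw [h b a]
    exact Finset.sum_congr rfl fun i _ => mul_comm _ _
  tfae_have 2 → 1 := by
    intro hfg
    obtain ⟨n, w, c, h⟩ := factor_of_span_fg _ hfg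
    refine ⟨n, fun i => ⇑(w i), fun i a => c a i, fun a b => ?_⟩
    have := h b a
    simp only [LinearMap.coe_comp, Function.comp_apply, LinearMap.mulRight_apply] at this
    rw [this]
    exact Finset.sum_congr rfl fun i _ => mul_comm _ _
  tfae_have 1 → 3 := by
    rintro ⟨n, fi, gi, h⟩
    refine span_fg_of_factor hNoeth _ gi (fun a => ⟨fun i => fi i a, fun b => ?_⟩)
    simp only [LinearMap.coe_comp, Function.comp_apply, LinearMap.mulLeft_apply]
    rw [h a b]
  tfae_have 3 → 1 := by
    intro hfg
    obtain ⟨n, w, c, h⟩ := factor_of_span_fg _ hfg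
    refine ⟨n, fun i a => c a i, fun i => ⇑(w i), fun a b => ?_⟩
    have := h a b
    simp only [LinearMap.coe_comp, Function.comp_apply, LinearMap.mulLeft_apply] at this
    rw [this]
  tfae_finish
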